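/- Let B be the 2×2 complex matrix with rows (1, b) and (0, μ₂), where b ∈ ℂ and μ₂ is a nonzero complex number with μ₂ ∉ ℝ. Then there do not exist a nonzero complex number μ and an invertible 2×2 complex matrix P such that (1/μ)·P·B·P̄ᵀ is Hermitian. -/

import Mathlib

/-! Congruence by an invertible matrix reflects being Hermitian, so `μ⁻¹ • B` would itself be
Hermitian. Its diagonal entries `μ⁻¹` and `μ⁻¹ * μ₂` would then both be real, forcing `μ₂` real. -/

open Matrix

theorem Matrix.IsHermitian.of_mul_mul_conjTranspose {n α : Type*} [Fintype n] [DecidableEq n]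
    [CommRing α] [StarRing α] {A P : Matrix n n α} (hP : IsUnit P.det)
    (h : (P * A * Pᴴ).IsHermitian) : A.IsHermitian := by
  have hA : A = P⁻¹ * (P * A * Pᴴ) * P⁻¹ᴴ := by
    rw [conjTranspose_nonsing_inv, Matrix.mul_assoc, Matrix.mul_assoc,
      Matrix.mul_nonsing_inv _ (by rwa [det_conjTranspose, isUnit_star]), Matrix.mul_one,
      Matrix.nonsing_inv_mul_cancel_left _ _ hP]
  rw [hA]
  exact isHermitian_mul_mul_conjTranspose _ h

theorem Complex.im_eq_zero_of_isHermitian_smul {n : Type*} {A : Matrix n n ℂ} {c : ℂ}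
    (hc : c ≠ 0) (h : (c • A).IsHermitian) {i : n} (hi : A i i = 1) (j : n) :
    (A j j).im = 0 := by
  have real_diag (k : n) : (c * A k k).im = 0 :=
    Complex.conj_eq_iff_im.mp (by simpa using h.apply k k)
  have hc_im : c.im = 0 := by simpa [hi] using real_diag i
  have hc_re : c.re ≠ 0 := fun hre => hc (Complex.ext hre hc_im)
  have hj := real_diag j
  simp only [Complex.mul_im, hc_im, zero_mul, add_zero, mul_eq_zero] at hj
  exact hj.resolve_left hc_re

theorem flattening_stmt2_general (b μ₂ : ℂ) (hμ₂R : μ₂.im ≠ 0) :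
    ¬ ∃ (μ : ℂ) (P : Matrix (Fin 2) (Fin 2) ℂ), μ ≠ 0 ∧ IsUnit P.det ∧
      (μ⁻¹ • (P * !![1, b; 0, μ₂] * Pᴴ)).IsHermitian := by
  rintro ⟨μ, P, hμ, hP, hH⟩
  have hB : (μ⁻¹ • !![1, b; 0, μ₂]).IsHermitian := by
    refine IsHermitian.of_mul_mul_conjTranspose hP ?_
    rwa [Matrix.mul_smul, Matrix.smul_mul]
  exact hμ₂R (Complex.im_eq_zero_of_isHermitian_smul (inv_ne_zero hμ) hB (i := 0) rfl 1)

/-- An upper-triangular `2×2` complex matrix `!![1, b; 0, μ₂]` with `μ₂` nonzero and non-real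
cannot be made Hermitian by congruence and scaling. -/
theorem flattening_stmt2 (b μ₂ : ℂ) (hμ₂ : μ₂ ≠ 0) (hμ₂R : μ₂.im ≠ 0) :
    ¬ ∃ (μ : ℂ) (P : Matrix (Fin 2) (Fin 2) ℂ), μ ≠ 0 ∧ IsUnit P.det ∧
      (μ⁻¹ • (P * !![1, b; 0, μ₂] * Pᴴ)).IsHermitian :=
  flattening_stmt2_general b μ₂ hμ₂R
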